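/- arXiv:2202.09305 — 3 statements merged into one kernel-verified Lean document; each statement's English description precedes it below -/
import Mathlib

section
/- Let μ_1, ..., μ_k and μ̃_1, ..., μ̃_k be points in R^d. The two Gaussian-mixture posteriors φ and φ̃ (softmax of negative half squared distances) are equal as functions on R^d if and only if there exists v ∈ R^d such that μ̃_i = μ_i - v for all i, and ||μ_i||^2 - ||μ̃_i||^2 is the same constant for all i. -/
/-!
Softmax is invariant exactly under adding a common constant to all logits. Here the difference
of the logits of `φ` and `φ̃` at `x` is `⟪x, μ i - μ̃ i⟫ - (‖μ i‖² - ‖μ̃ i‖²) / 2`, affine in `x`,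
and such a family is independent of `i` for every `x` iff both its slope and its
intercept are.
-/

open Finset Real RealInnerProductSpace

noncomputable def softmax {ι : Type*} [Fintype ι] (a : ι → ℝ) (i : ι) : ℝ :=
  exp (a i) / ∑ j, exp (a j)

theorem softmax_eq_softmax_iff {ι : Type*} [Fintype ι] (a b : ι → ℝ) :
    softmax a = softmax b ↔ ∀ i j, a i - b i = a j - b j := by
  have sum_exp_ne_zero (c : ι → ℝ) (i : ι) : ∑ j, exp (c j) ≠ 0 :=
    (sum_pos (fun j _ => exp_pos _) ⟨i, mem_univ i⟩).ne'
  constructor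
  · intro h i j
    have exp_sub_eq (i : ι) : exp (a i - b i) = (∑ j, exp (a j)) / ∑ j, exp (b j) := by
      rw [exp_sub]
      exact (div_eq_div_iff_div_eq_div' (sum_exp_ne_zero a i) (exp_ne_zero _)).mp (congrFun h i)
    exact exp_injective ((exp_sub_eq i).trans (exp_sub_eq j).symm)
  · intro h
    ext i
    rw [softmax, softmax, div_eq_div_iff (sum_exp_ne_zero a i) (sum_exp_ne_zero b i), mul_sum,
      mul_sum]
    refine sum_congr rfl fun j _ => ?_
    rw [← exp_add, ← exp_add]
    congr 1
    linarith [h i j]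

theorem inner_add_eq_inner_add_iff {ι E : Type*} [NormedAddCommGroup E] [InnerProductSpace ℝ E]
    (w : ι → E) (r : ι → ℝ) :
    (∀ x i j, ⟪x, w i⟫ + r i = ⟪x, w j⟫ + r j) ↔ (∀ i j, w i = w j) ∧ ∀ i j, r i = r j := by
  constructor
  · intro h
    have hr (i j : ι) : r i = r j := by simpa using h 0 i j
    refine ⟨fun i j => ext_inner_left ℝ fun x => ?_, hr⟩
    simpa [hr i j] using h x i j
  · rintro ⟨hw, hr⟩ x i j
    rw [hw i j, hr i j]

theorem exists_forall_eq_iff {ι α : Type*} [Nonempty α] (f : ι → α) :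
    (∃ c, ∀ i, f i = c) ↔ ∀ i j, f i = f j := by
  refine ⟨fun ⟨c, hc⟩ i j => (hc i).trans (hc j).symm, fun h => ?_⟩
  cases isEmpty_or_nonempty ι with
  | inl => exact ⟨Classical.arbitrary α, isEmptyElim⟩
  | inr hι => exact ⟨f hι.some, fun i => h i _⟩

theorem posterior_eq_iff_shift {d k : ℕ}
    (μ μt : Fin k → EuclideanSpace ℝ (Fin d)) :
    (∀ x : EuclideanSpace ℝ (Fin d), ∀ i : Fin k,
        Real.exp (-‖x - μ i‖ ^ 2 / 2) / (∑ j, Real.exp (-‖x - μ j‖ ^ 2 / 2)) =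
        Real.exp (-‖x - μt i‖ ^ 2 / 2) / (∑ j, Real.exp (-‖x - μt j‖ ^ 2 / 2)))
      ↔
    ∃ v : EuclideanSpace ℝ (Fin d), (∀ i, μt i = μ i - v) ∧
      ∃ C : ℝ, ∀ i, ‖μ i‖ ^ 2 - ‖μt i‖ ^ 2 = C := by
  have log_ratio (x) (i) : -‖x - μ i‖ ^ 2 / 2 - -‖x - μt i‖ ^ 2 / 2 =
      ⟪x, μ i - μt i⟫ + -((‖μ i‖ ^ 2 - ‖μt i‖ ^ 2) / 2) := by
    rw [norm_sub_sq_real, norm_sub_sq_real, inner_sub_right]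
    ring
  have shift_iff : (∃ v, ∀ i, μt i = μ i - v) ↔ ∃ v, ∀ i, μ i - μt i = v := by
    refine exists_congr fun v => forall_congr' fun i => ?_
    rw [eq_sub_iff_add_eq, sub_eq_iff_eq_add', eq_comm]
  calc _ ↔ ∀ x, softmax (fun j => -‖x - μ j‖ ^ 2 / 2) =
          softmax (fun j => -‖x - μt j‖ ^ 2 / 2) := by
        simp only [funext_iff, softmax]
    _ ↔ ∀ x i j, ⟪x, μ i - μt i⟫ + -((‖μ i‖ ^ 2 - ‖μt i‖ ^ 2) / 2) =
          ⟪x, μ j - μt j⟫ + -((‖μ j‖ ^ 2 - ‖μt j‖ ^ 2) / 2) := by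
        simp only [softmax_eq_softmax_iff, log_ratio]
    _ ↔ _ := by
        rw [inner_add_eq_inner_add_iff, exists_and_right, shift_iff, exists_forall_eq_iff,
          exists_forall_eq_iff]
        simp only [neg_inj, div_left_inj' (two_ne_zero' ℝ)]
end

section
/- Let μ_1, ..., μ_k ∈ R^d (k ≤ d) be linearly independent with equal norms, and suppose v ∈ span{μ_1,...,μ_k} satisfies (2μ_i - v)^T v = 0 for all i ∈ [k]. Then v = 0 or v is the orthogonal projection of the origin onto the affine hull of {2μ_1, ..., 2μ_k}; in particular such a nonzero v is unique. -/
open RealInnerProductSpace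

theorem nonzero_sol_is_projection {d k : ℕ} (hkd : k ≤ d)
    (μ : Fin k → EuclideanSpace ℝ (Fin d))
    (hind : LinearIndependent ℝ μ)
    (hnorm : ∀ i j, ‖μ i‖ = ‖μ j‖)
    (v : EuclideanSpace ℝ (Fin d))
    (hspan : v ∈ Submodule.span ℝ (Set.range μ))
    (horth : ∀ i, ⟪(2 : ℝ) • μ i - v, v⟫ = 0) :
    (v = 0 ∨
      (v ∈ affineSpan ℝ (Set.range (fun i => (2 : ℝ) • μ i)) ∧
        ∀ p ∈ affineSpan ℝ (Set.range (fun i => (2 : ℝ) • μ i)), ⟪p - v, v⟫ = 0)) ∧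
    ∀ w : EuclideanSpace ℝ (Fin d),
      w ∈ Submodule.span ℝ (Set.range μ) →
      (∀ i, ⟪(2 : ℝ) • μ i - w, w⟫ = 0) → v ≠ 0 → w ≠ 0 → w = v := by
  -- from the orthogonality condition: ⟪μ i, u⟫ = ⟪u,u⟫/2
  have hhalf : ∀ (u : EuclideanSpace ℝ (Fin d)),
      (∀ i, ⟪(2 : ℝ) • μ i - u, u⟫ = 0) → ∀ i, ⟪μ i, u⟫ = ⟪u, u⟫ / 2 := by
    intro u hu i
    have := hu i
    rw [inner_sub_left, real_inner_smul_left] at this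
    linarith
  -- coefficients sum to 2 for nonzero solutions
  have hsum2 : ∀ (u : EuclideanSpace ℝ (Fin d)) (c : Fin k → ℝ),
      (∑ i, c i • μ i = u) → (∀ i, ⟪(2 : ℝ) • μ i - u, u⟫ = 0) → u ≠ 0 →
      ∑ i, c i = 2 := by
    intro u c hc hu hu0
    have h0 : ∑ i, ⟪c i • μ i, u⟫ = (∑ i, c i) * (⟪u, u⟫ / 2) := by
      rw [Finset.sum_mul]
      exact Finset.sum_congr rfl fun i _ => by
        rw [real_inner_smul_left, hhalf u hu i]
    have h1 : (∑ i, c i) * (⟪u, u⟫ / 2) = ⟪u, u⟫ := by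
      rw [← h0, ← sum_inner, hc]
    have hN : ⟪u, u⟫ ≠ 0 := inner_self_ne_zero.mpr hu0
    exact (mul_left_cancel₀ hN (by linear_combination -2 * h1)).symm
  have hiv := hhalf v horth
  constructor
  · by_cases hv : v = 0
    · exact Or.inl hv
    · right
      obtain ⟨a, ha⟩ := (Submodule.mem_span_range_iff_exists_fun ℝ).mp hspan
      have hsa : ∑ i, a i = 2 := hsum2 v a ha horth hv
      have hk : 0 < k := by
        rcases Nat.eq_zero_or_pos k with h | h
        · subst h; simp at hsa
        · exact h
      set i0 : Fin k := ⟨0, hk⟩ with hi0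
      set s : Set (EuclideanSpace ℝ (Fin d)) :=
        Set.range (fun i => (2 : ℝ) • μ i) with hs
      have h2mem : (2 : ℝ) • μ i0 ∈ affineSpan ℝ s :=
        mem_affineSpan ℝ ⟨i0, rfl⟩
      have key : ∑ i, (a i / 2) • ((2 : ℝ) • μ i - (2 : ℝ) • μ i0)
          = v - (2 : ℝ) • μ i0 := by
        simp only [smul_sub]
        rw [Finset.sum_sub_distrib]
        congr 1
        · rw [← ha]
          exact Finset.sum_congr rfl fun i _ => by
            rw [smul_smul, div_mul_cancel₀]
            norm_num
        · rw [← Finset.sum_smul]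
          have h1 : ∑ i, a i / 2 = 1 := by
            rw [← Finset.sum_div, hsa]; norm_num
          rw [h1, one_smul]
      have hvs : v - (2 : ℝ) • μ i0 ∈ vectorSpan ℝ s := by
        rw [← key]
        refine Submodule.sum_mem _ fun i _ => Submodule.smul_mem _ _ ?_
        have := vsub_mem_vectorSpan ℝ
          (Set.mem_range_self (f := fun i => (2 : ℝ) • μ i) i)
          (Set.mem_range_self (f := fun i => (2 : ℝ) • μ i) i0)
        simpa using this
      have hvmem : v ∈ affineSpan ℝ s := by
        refine (AffineSubspace.vsub_right_mem_direction_iff_mem h2mem v).mp ?_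
        rw [direction_affineSpan]
        simpa using hvs
      refine ⟨hvmem, ?_⟩
      have horthspan : ∀ u ∈ vectorSpan ℝ s, ⟪u, v⟫ = 0 := by
        intro u hu
        rw [vectorSpan_def] at hu
        induction hu using Submodule.span_induction with
        | mem x hx =>
          obtain ⟨x1, hx1, x2, hx2, hx12⟩ := hx
          obtain ⟨i, hi⟩ := hx1
          obtain ⟨j, hj⟩ := hx2
          subst hx12 hi hj
          simp only [vsub_eq_sub]
          rw [inner_sub_left, real_inner_smul_left, real_inner_smul_left,
            hiv i, hiv j]
          ring
        | zero => simp
        | add x y _ _ hx hy => rw [inner_add_left, hx, hy]; ring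
        | smul c x _ hx => rw [real_inner_smul_left, hx]; ring
      intro p hp
      have hdir := AffineSubspace.vsub_mem_direction hp hvmem
      rw [direction_affineSpan] at hdir
      exact horthspan _ hdir
  · intro w hw hworth hv0 hw0
    obtain ⟨a, ha⟩ := (Submodule.mem_span_range_iff_exists_fun ℝ).mp hspan
    obtain ⟨b, hb⟩ := (Submodule.mem_span_range_iff_exists_fun ℝ).mp hw
    have hsa := hsum2 v a ha horth hv0
    have hsb := hsum2 w b hb hworth hw0
    have hiw := hhalf w hworth
    have hvx : ∀ (u : EuclideanSpace ℝ (Fin d)) (c : Fin k → ℝ),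
        (∑ i, c i • μ i = u) → ∑ i, c i = 2 →
        ⟪u, v - w⟫ = ⟪v, v⟫ - ⟪w, w⟫ := by
      intro u c hc hcs
      rw [← hc, sum_inner]
      have hcg : ∀ i ∈ Finset.univ,
          ⟪c i • μ i, v - w⟫ = c i * (⟪v, v⟫ / 2 - ⟪w, w⟫ / 2) := fun i _ => by
        rw [real_inner_smul_left, inner_sub_right, hiv i, hiw i]
      rw [Finset.sum_congr rfl hcg, ← Finset.sum_mul, hcs]
      ring
    have h1 := hvx v a ha hsa
    have h2 := hvx w b hb hsb
    have hz : ⟪v - w, v - w⟫ = 0 := by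
      rw [inner_sub_left, h1, h2]; ring
    exact (sub_eq_zero.mp (inner_self_eq_zero.mp hz)).symm
end

section
/- Let M ∈ R^{k×k} be invertible with all columns μ_i of equal norm, and set v̂ = M^{-T} 1 / ||M^{-T} 1|| (where 1 is the all-ones vector). Then the Householder reflection H = I - 2 v̂ v̂^T satisfies ||H μ_i|| = ||μ_i|| for all i, and H μ_i - μ_i is the same vector for every column i. -/
open Matrix

theorem householder_from_inverse_ones {k : ℕ}
    (M : Matrix (Fin k) (Fin k) ℝ) (hM : IsUnit M.det)
    (hnorm : ∀ i j : Fin k, M.transpose i ⬝ᵥ M.transpose i = M.transpose j ⬝ᵥ M.transpose j)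
    (w : Fin k → ℝ) (hw : w = (M⁻¹).transpose.mulVec 1)
    (vhat : Fin k → ℝ) (hvhat : vhat = (Real.sqrt (w ⬝ᵥ w))⁻¹ • w)
    (H : Matrix (Fin k) (Fin k) ℝ)
    (hH : H = 1 - (2 : ℝ) • Matrix.vecMulVec vhat vhat) :
    (∀ i : Fin k,
      H.mulVec (M.transpose i) ⬝ᵥ H.mulVec (M.transpose i) = M.transpose i ⬝ᵥ M.transpose i) ∧
    ∀ i j : Fin k,
      H.mulVec (M.transpose i) - M.transpose i = H.mulVec (M.transpose j) - M.transpose j := by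
  -- columns expressed via standard basis vectors
  have hcol : ∀ i : Fin k, M.transpose i = M.mulVec (Pi.single i 1) := by
    intro i
    ext j
    simp [Matrix.mulVec, dotProduct_single]
  -- key: w ⬝ᵥ column i = 1
  have hwcol : ∀ i : Fin k, w ⬝ᵥ M.transpose i = 1 := by
    intro i
    rw [hw, hcol, Matrix.mulVec_transpose, ← Matrix.dotProduct_mulVec,
      Matrix.mulVec_mulVec, Matrix.nonsing_inv_mul M hM, Matrix.one_mulVec,
      one_dotProduct]
    simp
  -- H applied to any vector
  have hHx : ∀ x : Fin k → ℝ, H.mulVec x = x - (2 * (vhat ⬝ᵥ x)) • vhat := by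
    intro x
    rw [hH, Matrix.sub_mulVec, Matrix.one_mulVec, Matrix.smul_mulVec]
    congr 1
    ext j
    simp [Matrix.vecMulVec, Matrix.mulVec, dotProduct, Finset.mul_sum,
      mul_comm, mul_assoc, mul_left_comm]
  constructor
  · intro i
    -- vhat is a unit vector (since w ≠ 0, which follows from hwcol)
    have hwne : w ≠ 0 := by
      intro h
      have := hwcol i
      rw [h] at this
      simp at this
    have hww : 0 < w ⬝ᵥ w := by
      have h0 : 0 ≤ w ⬝ᵥ w := by
        simp only [dotProduct]
        exact Finset.sum_nonneg fun l _ => mul_self_nonneg _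
      rcases h0.lt_or_eq with h | h
      · exact h
      · exact absurd (dotProduct_self_eq_zero.mp h.symm) hwne
    have hvv : vhat ⬝ᵥ vhat = 1 := by
      rw [hvhat]
      simp only [smul_dotProduct, dotProduct_smul, smul_eq_mul]
      rw [← mul_assoc, ← mul_inv, Real.mul_self_sqrt hww.le]
      exact inv_mul_cancel₀ (ne_of_gt hww)
    rw [hHx]
    set x := M.transpose i
    set c := vhat ⬝ᵥ x with hc
    have hxv : x ⬝ᵥ vhat = c := by rw [hc, dotProduct_comm]
    simp only [sub_dotProduct, dotProduct_sub, smul_dotProduct,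
      dotProduct_smul, smul_eq_mul, hxv, ← hc, hvv]
    ring
  · intro i j
    rw [hHx, hHx]
    have hvc : ∀ l : Fin k, vhat ⬝ᵥ M.transpose l = (Real.sqrt (w ⬝ᵥ w))⁻¹ := by
      intro l
      rw [hvhat, smul_dotProduct, hwcol l, smul_eq_mul, mul_one]
    rw [hvc i, hvc j]
    abel
end
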